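/- arXiv:2305.06573 — 4 statements merged into one kernel-verified Lean document; each statement's English description precedes it below -/
import Mathlib

section
/- Define ξ : ℝ → ℝ by ξ(x) = e^{2x}(2 − 4x + 3x²) − 2 + x². Then ξ(−2/3) = 6e^{−4/3} − 14/9 > 0 and ξ(−1/2) = (19/4)e^{−1} − 7/4 < 0. Consequently, by continuity of ξ there exists a real number c with −2/3 < c < −1/2 and ξ(c) = 0; in particular any such root satisfies −1 < c < −1/2. -/
/-- The function `ξ(x) = e^{2x}(2 - 4x + 3x²) - 2 + x²` from the construction of the
Koiso–Cao Ricci soliton. -/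
noncomputable def xiFun (x : ℝ) : ℝ :=
  Real.exp (2 * x) * (2 - 4 * x + 3 * x ^ 2) - 2 + x ^ 2

lemma xi_at_l : xiFun (-2 / 3) = 6 * Real.exp (-4 / 3) - 14 / 9 := by
  unfold xiFun; norm_num; ring

lemma xi_at_r : xiFun (-1 / 2) = 19 / 4 * Real.exp (-1) - 7 / 4 := by
  unfold xiFun; norm_num; ring

lemma exp_43_lt : Real.exp (4 / 3) < 27 / 7 := by
  have h3 : (Real.exp (4 / 3)) ^ 3 = Real.exp 4 := by
    rw [← Real.exp_nat_mul]; norm_num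
  have h4 : Real.exp 4 = (Real.exp 1) ^ 4 := by
    rw [← Real.exp_nat_mul]; norm_num
  have he : Real.exp 1 < 2.7182818286 := Real.exp_one_lt_d9
  have hpos : (0:ℝ) < Real.exp 1 := Real.exp_pos 1
  have h5 : Real.exp 4 < (27 / 7) ^ 3 := by
    rw [h4]
    calc Real.exp 1 ^ 4 < 2.7182818286 ^ 4 := by
          exact pow_lt_pow_left₀ he hpos.le (by norm_num)
      _ < (27 / 7) ^ 3 := by norm_num
  exact lt_of_pow_lt_pow_left₀ 3 (by norm_num) (by rw [h3]; exact h5)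

lemma xi_l_pos : 0 < xiFun (-2 / 3) := by
  rw [xi_at_l]
  have h : Real.exp (-4 / 3) = (Real.exp (4 / 3))⁻¹ := by
    rw [← Real.exp_neg]; norm_num
  have := exp_43_lt
  have hp := Real.exp_pos (4/3 : ℝ)
  rw [h]
  have : (27 / 7 : ℝ)⁻¹ < (Real.exp (4 / 3))⁻¹ := by
    apply inv_strictAnti₀ hp this
  nlinarith

lemma xi_r_neg : xiFun (-1 / 2) < 0 := by
  rw [xi_at_r]
  have h : Real.exp (-1 : ℝ) = (Real.exp 1)⁻¹ := by
    rw [← Real.exp_neg]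
  have he : (2.7182818283 : ℝ) < Real.exp 1 := Real.exp_one_gt_d9
  have hp : (0:ℝ) < Real.exp 1 := Real.exp_pos 1
  rw [h]
  have : (Real.exp 1)⁻¹ < (2.7182818283 : ℝ)⁻¹ := by
    apply inv_strictAnti₀ (by norm_num) he
  nlinarith

/-- `ξ(-2/3) = 6e^{-4/3} - 14/9 > 0`, `ξ(-1/2) = (19/4)e^{-1} - 7/4 < 0`, hence `ξ` has a root
`c` with `-2/3 < c < -1/2`; in particular `-1 < c < -1/2`. -/
theorem xiFun_root_exists :
    xiFun (-2 / 3) = 6 * Real.exp (-4 / 3) - 14 / 9 ∧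
    0 < xiFun (-2 / 3) ∧
    xiFun (-1 / 2) = 19 / 4 * Real.exp (-1) - 7 / 4 ∧
    xiFun (-1 / 2) < 0 ∧
    ∃ c : ℝ, xiFun c = 0 ∧ -2 / 3 < c ∧ c < -1 / 2 ∧ -1 < c := by
  refine ⟨xi_at_l, xi_l_pos, xi_at_r, xi_r_neg, ?_⟩
  have hcont : ContinuousOn xiFun (Set.Icc (-2/3 : ℝ) (-1/2)) := by
    apply Continuous.continuousOn
    unfold xiFun
    continuity
  have hsub := intermediate_value_Ioo' (by norm_num : (-2/3 : ℝ) ≤ -1/2) hcont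
  have h0 : (0:ℝ) ∈ Set.Ioo (xiFun (-1/2)) (xiFun (-2/3)) := ⟨xi_r_neg, xi_l_pos⟩
  obtain ⟨c, hc, hfc⟩ := hsub h0
  exact ⟨c, hfc, hc.1, hc.2, by linarith [hc.1]⟩
end

section
/- Let c ∈ ℝ and let f₂ : ℝ → ℝ be twice differentiable at a point t, satisfying at t the equation 2 f₂(t) f₂''(t) + 4 f₂'(t)² − 4 + f₂(t)² (1 + c f₂'(t)²) = 0, where f₂' and f₂'' denote the first and second derivatives. Define f : ℝ → ℝ by f(s) = −c f₂(s)²/2 and set R(t) = 4c f₂'(t)² + 2c f₂(t) f₂''(t) + 4. Then the derivative of f at t satisfies f'(t)² = 2 f(t) − R(t) + 4 + 4c. -/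
theorem deriv_const_mul_sq_div_two {a t : ℝ} {g : ℝ → ℝ} (hg : DifferentiableAt ℝ g t) :
    deriv (fun s => a * g s ^ 2 / 2) t = a * g t * deriv g t := by
  have h : HasDerivAt (fun s => a * g s ^ 2 / 2) (a * (2 * g t * deriv g t) / 2) t := by
    simpa using ((hg.hasDerivAt.fun_pow 2).const_mul a).div_const 2
  rw [h.deriv]
  ring

theorem koiso_cao_conservation_law_general (c t : ℝ) (f₂ : ℝ → ℝ)
    (hd1 : DifferentiableAt ℝ f₂ t)
    (hode : 2 * f₂ t * deriv (deriv f₂) t + 4 * (deriv f₂ t) ^ 2 - 4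
        + (f₂ t) ^ 2 * (1 + c * (deriv f₂ t) ^ 2) = 0) :
    (deriv (fun s => -c * (f₂ s) ^ 2 / 2) t) ^ 2
      = 2 * (-c * (f₂ t) ^ 2 / 2)
        - (4 * c * (deriv f₂ t) ^ 2 + 2 * c * f₂ t * deriv (deriv f₂) t + 4)
        + 4 + 4 * c := by
  rw [deriv_const_mul_sq_div_two hd1]
  linear_combination c * hode

/-- The conservation law (7.3) of the Koiso–Cao soliton: if `f₂` satisfies the ODE
`2f₂f₂'' + 4f₂'² - 4 + f₂²(1 + c f₂'²) = 0` at `t`, then the Ricci potential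
`f = -c f₂²/2` satisfies `f'² = 2f - R + 4 + 4c` at `t`, where
`R = 4cf₂'² + 2cf₂f₂'' + 4`. -/
theorem koiso_cao_conservation_law (c t : ℝ) (f₂ : ℝ → ℝ)
    (hd1 : DifferentiableAt ℝ f₂ t) (hd2 : DifferentiableAt ℝ (deriv f₂) t)
    (hode : 2 * f₂ t * deriv (deriv f₂) t + 4 * (deriv f₂ t) ^ 2 - 4
        + (f₂ t) ^ 2 * (1 + c * (deriv f₂ t) ^ 2) = 0) :
    (deriv (fun s => -c * (f₂ s) ^ 2 / 2) t) ^ 2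
      = 2 * (-c * (f₂ t) ^ 2 / 2)
        - (4 * c * (deriv f₂ t) ^ 2 + 2 * c * f₂ t * deriv (deriv f₂) t + 4)
        + 4 + 4 * c :=
  koiso_cao_conservation_law_general c t f₂ hd1 hode
end

section
/- Let m ≥ 1 be an integer, let a < b be real numbers, let h : ℝ → ℝ be C^∞ on an open interval containing [a, b], let α₀ : ℝ → ℝ be continuous and positive on [a, b], let a₁, …, a_m be positive real constants, and let p > 2 be real. Define the differential operator L on functions by (Lw)(t) = w''(t) + h(t) w'(t), and set L̂w = α₀·w + Σ_{i=1}^{m} a_i (−1)^i L^i w, where L^i is the i-fold iterate of L. Suppose w : ℝ → ℝ is of class C^{2m} on [a, b] and satisfies (L̂w)(t) = |w(t)|^{p−2} w(t) for all t ∈ (a, b). If w vanishes identically on some subinterval [c, d] ⊆ [a, b] with c < d, then w vanishes identically on [a, b]. -/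
/-- The one-dimensional operator `L w = w'' + h w'` coming from the reduction of the
Laplacian along the orbit-distance function, `h` being the mean curvature. -/
noncomputable def Lop (h : ℝ → ℝ) (w : ℝ → ℝ) : ℝ → ℝ :=
  fun t => deriv (deriv w) t + h t * deriv w t

open Set Filter


lemma iter_deriv_contDiffOn {N j : ℕ} {w : ℝ → ℝ} {V : Set ℝ} (hV : IsOpen V)
    (hw : ContDiffOn ℝ N w V) (hj : j ≤ N) :
    ContDiffOn ℝ ((N - j : ℕ) : WithTop ℕ∞) (deriv^[j] w) V := by
  induction j with
  | zero => simpa using hw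
  | succ k ih =>
    have hk : k ≤ N := le_of_lt (Nat.lt_of_succ_le hj)
    rw [Function.iterate_succ_apply']
    have := (ih hk).deriv_of_isOpen hV (m := ((N - (k+1) : ℕ) : WithTop ℕ∞))
      (by
        have h5 : (N - (k+1)) + 1 = N - k := by omega
        exact_mod_cast le_of_eq h5)
    exact this

lemma iter_deriv_hasDerivAt {N j : ℕ} {w : ℝ → ℝ} {V : Set ℝ} (hV : IsOpen V)
    (hw : ContDiffOn ℝ N w V) (hj : j < N) {s : ℝ} (hs : s ∈ V) :
    HasDerivAt (deriv^[j] w) (deriv^[j+1] w s) s := by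
  have h1 : ContDiffOn ℝ ((N - j : ℕ) : WithTop ℕ∞) (deriv^[j] w) V :=
    iter_deriv_contDiffOn hV hw hj.le
  have h2 : DifferentiableOn ℝ (deriv^[j] w) V :=
    h1.differentiableOn (by exact_mod_cast (by omega : N - j ≠ 0))
  have h3 : DifferentiableAt ℝ (deriv^[j] w) s :=
    (h2 s hs).differentiableAt (hV.mem_nhds hs)
  have := h3.hasDerivAt
  rwa [show deriv^[j+1] w s = deriv (deriv^[j] w) s from by
    rw [Function.iterate_succ_apply']]

open scoped ContDiff in
lemma expansion_deriv {N k : ℕ} {w g : ℝ → ℝ} {V : Set ℝ} (hV : IsOpen V)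
    (hw : ContDiffOn ℝ N w V) (hk : k < N) (c : ℕ → ℝ → ℝ)
    (hc : ∀ j, ContDiffOn ℝ ∞ (c j) V)
    (hg : ∀ s ∈ V, g s = deriv^[k] w s + ∑ j ∈ Finset.range k, c j s * deriv^[j] w s) :
    ∃ c' : ℕ → ℝ → ℝ, (∀ j, ContDiffOn ℝ ∞ (c' j) V) ∧
      ∀ s ∈ V, deriv g s
        = deriv^[k+1] w s + ∑ j ∈ Finset.range (k+1), c' j s * deriv^[j] w s := by
  have hd : ∀ j, ContDiffOn ℝ ∞ (deriv (c j)) V :=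
    fun j => ((contDiffOn_infty_iff_deriv_of_isOpen hV).1 (hc j)).2
  refine ⟨fun j s => (if j < k then deriv (c j) s else 0) + (if j = 0 then 0 else c (j-1) s),
    ?_, ?_⟩
  · intro j
    apply ContDiffOn.add
    · by_cases h1 : j < k
      · simpa [h1] using hd j
      · simpa [h1] using contDiffOn_const (c := (0:ℝ))
    · by_cases h2 : j = 0
      · simpa [h2] using contDiffOn_const (c := (0:ℝ))
      · simpa [h2] using hc (j-1)
  · intro s hs
    have hDj : ∀ j ≤ k, HasDerivAt (deriv^[j] w) (deriv^[j+1] w s) s :=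
      fun j hj => iter_deriv_hasDerivAt hV hw (lt_of_le_of_lt hj hk) hs
    have hone : (1 : WithTop ℕ∞) ≤ ∞ := by exact_mod_cast (le_top : (1:ℕ∞) ≤ ⊤)
    have hcj : ∀ j, HasDerivAt (c j) (deriv (c j) s) s := fun j =>
      ((((hc j).differentiableOn (by simp)) s hs).differentiableAt (hV.mem_nhds hs)).hasDerivAt
    have hsum : HasDerivAt
        (fun t => deriv^[k] w t + ∑ j ∈ Finset.range k, c j t * deriv^[j] w t)
        (deriv^[k+1] w s + ∑ j ∈ Finset.range k,
          (deriv (c j) s * deriv^[j] w s + c j s * deriv^[j+1] w s)) s :=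
      (hDj k le_rfl).add (HasDerivAt.fun_sum fun j hj =>
        (hcj j).mul (hDj j (Finset.mem_range.1 hj).le))
    have hde : deriv g s = deriv^[k+1] w s + ∑ j ∈ Finset.range k,
        (deriv (c j) s * deriv^[j] w s + c j s * deriv^[j+1] w s) := by
      have heq : g =ᶠ[nhds s]
          fun t => deriv^[k] w t + ∑ j ∈ Finset.range k, c j t * deriv^[j] w t := by
        filter_upwards [hV.mem_nhds hs] with t ht using hg t ht
      rw [heq.deriv_eq, hsum.deriv]
    rw [hde]
    congr 1
    have e1 : ∑ j ∈ Finset.range (k+1),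
        ((if j < k then deriv (c j) s else 0) + (if j = 0 then 0 else c (j-1) s))
          * deriv^[j] w s
        = ∑ j ∈ Finset.range (k+1), ((if j < k then deriv (c j) s else 0) * deriv^[j] w s)
          + ∑ j ∈ Finset.range (k+1), ((if j = 0 then 0 else c (j-1) s) * deriv^[j] w s) := by
      rw [← Finset.sum_add_distrib]; exact Finset.sum_congr rfl fun j _ => add_mul _ _ _
    have e2 : ∑ j ∈ Finset.range (k+1), ((if j < k then deriv (c j) s else 0) * deriv^[j] w s)
        = ∑ j ∈ Finset.range k, deriv (c j) s * deriv^[j] w s := by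
      rw [Finset.sum_range_succ, if_neg (lt_irrefl k), zero_mul, add_zero]
      exact Finset.sum_congr rfl fun j hj => by rw [if_pos (Finset.mem_range.1 hj)]
    have e3 : ∑ j ∈ Finset.range (k+1), ((if j = 0 then 0 else c (j-1) s) * deriv^[j] w s)
        = ∑ j ∈ Finset.range k, c j s * deriv^[j+1] w s := by
      rw [Finset.sum_range_succ']
      simp
    rw [e1, e2, e3]
    exact Finset.sum_add_distrib
open scoped ContDiff in
lemma lop_expansion {N : ℕ} {w h : ℝ → ℝ} {V : Set ℝ} (hV : IsOpen V)
    (hw : ContDiffOn ℝ N w V) (hh : ContDiffOn ℝ ∞ h V) (i : ℕ) (hi : 2 * i ≤ N) :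
    ∃ c : ℕ → ℝ → ℝ, (∀ j, ContDiffOn ℝ ∞ (c j) V) ∧
      ∀ s ∈ V, (Lop h)^[i] w s
        = deriv^[2*i] w s + ∑ j ∈ Finset.range (2*i), c j s * deriv^[j] w s := by
  induction i with
  | zero => exact ⟨fun _ _ => 0, fun _ => contDiffOn_const, by simp⟩
  | succ i ih =>
    obtain ⟨c, hc, hce⟩ := ih (by omega)
    obtain ⟨c1, hc1, hc1e⟩ := expansion_deriv (k := 2*i) hV hw (by omega) c hc hce
    obtain ⟨c2, hc2, hc2e⟩ := expansion_deriv (k := 2*i+1) hV hw (by omega) c1 hc1 hc1e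
    refine ⟨fun j s => c2 j s
        + h s * ((if j = 2*i+1 then 1 else 0) + (if j < 2*i+1 then c1 j s else 0)), ?_, ?_⟩
    · intro j
      apply (hc2 j).add
      apply hh.mul
      apply ContDiffOn.add
      · by_cases h1 : j = 2*i+1
        · simpa [h1] using contDiffOn_const (c := (1:ℝ))
        · simpa [h1] using contDiffOn_const (c := (0:ℝ))
      · by_cases h2 : j < 2*i+1
        · simpa [h2] using hc1 j
        · simpa [h2] using contDiffOn_const (c := (0:ℝ))
    · intro s hs
      have hit : (Lop h)^[i+1] w s
          = deriv (deriv ((Lop h)^[i] w)) s + h s * deriv ((Lop h)^[i] w) s := by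
        rw [Function.iterate_succ_apply']; rfl
      have hidx : 2 * (i+1) = (2*i+1)+1 := by ring
      rw [hit, hc2e s hs, hc1e s hs, hidx]
      have e1 : ∑ j ∈ Finset.range (2*i+1+1),
          (c2 j s + h s * ((if j = 2*i+1 then (1:ℝ) else 0)
            + (if j < 2*i+1 then c1 j s else 0))) * deriv^[j] w s
          = ∑ j ∈ Finset.range (2*i+1+1), c2 j s * deriv^[j] w s
            + (∑ j ∈ Finset.range (2*i+1+1),
                (if j = 2*i+1 then h s * deriv^[j] w s else 0)
              + ∑ j ∈ Finset.range (2*i+1+1),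
                (if j < 2*i+1 then h s * (c1 j s * deriv^[j] w s) else 0)) := by
        rw [← Finset.sum_add_distrib, ← Finset.sum_add_distrib]
        refine Finset.sum_congr rfl fun j _ => ?_
        by_cases h1 : j = 2*i+1 <;> by_cases h2 : j < 2*i+1 <;> simp [h1, h2] <;> ring
      have e2 : ∑ j ∈ Finset.range (2*i+1+1), (if j = 2*i+1 then h s * deriv^[j] w s else 0)
          = h s * deriv^[2*i+1] w s := by
        rw [Finset.sum_ite_eq' (Finset.range (2*i+1+1)) (2*i+1)
          (fun j => h s * deriv^[j] w s)]
        simp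
      have e3 : ∑ j ∈ Finset.range (2*i+1+1),
          (if j < 2*i+1 then h s * (c1 j s * deriv^[j] w s) else 0)
          = h s * ∑ j ∈ Finset.range (2*i+1), c1 j s * deriv^[j] w s := by
        rw [Finset.sum_range_succ, if_neg (lt_irrefl (2*i+1)), add_zero, Finset.mul_sum]
        exact Finset.sum_congr rfl fun j hj => by rw [if_pos (Finset.mem_range.1 hj)]
      rw [e1, e2, e3]
      ring


/-- One-dimensional unique continuation principle (underlying Lemma 5.2): a `C^{2m}`
solution of `α₀ w + ∑_{i=1}^m aᵢ (-1)ⁱ Lⁱ w = |w|^{p-2} w` on `(a,b)` which vanishes on a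
nontrivial subinterval `[c,d] ⊆ [a,b]` vanishes identically on `[a,b]`. -/
theorem unique_continuation_one_dim (m : ℕ) (hm : 1 ≤ m) (a b : ℝ) (hab : a < b)
    (h α₀ : ℝ → ℝ) (A : ℕ → ℝ) (p : ℝ)
    (hh : ∃ U : Set ℝ, IsOpen U ∧ Set.Icc a b ⊆ U ∧ ContDiffOn ℝ (⊤ : ℕ∞) h U)
    (hα₀cont : ContinuousOn α₀ (Set.Icc a b))
    (hα₀pos : ∀ t ∈ Set.Icc a b, 0 < α₀ t)
    (hA : ∀ i ∈ Finset.Icc 1 m, 0 < A i)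
    (hp : 2 < p)
    (w : ℝ → ℝ) (hw : ContDiffOn ℝ (2 * m) w (Set.Icc a b))
    (hode : ∀ t ∈ Set.Ioo a b,
      α₀ t * w t + ∑ i ∈ Finset.Icc 1 m, A i * (-1 : ℝ) ^ i * ((Lop h)^[i] w) t
        = |w t| ^ (p - 2) * w t)
    (c d : ℝ) (hac : a ≤ c) (hcd : c < d) (hdb : d ≤ b)
    (hvanish : ∀ t ∈ Set.Icc c d, w t = 0) :
    ∀ t ∈ Set.Icc a b, w t = 0 := by
  classical
  obtain ⟨U, hUo, hUi, hhU⟩ := hh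
  set V : Set ℝ := Ioo a b with hVdef
  have hVo : IsOpen V := isOpen_Ioo
  have hVsub : V ⊆ Icc a b := Ioo_subset_Icc_self
  have hhV : ContDiffOn ℝ (⊤ : ℕ∞) h V := (hhU.of_le (by simp)).mono (hVsub.trans hUi)
  have hwV : ContDiffOn ℝ (2*m) w V := hw.mono hVsub
  set t₀ : ℝ := (c + d) / 2 with ht₀def
  have ht₀cd : t₀ ∈ Ioo c d := ⟨by linarith, by linarith⟩
  have ht₀ : t₀ ∈ V := ⟨lt_of_le_of_lt hac ht₀cd.1, lt_of_lt_of_le ht₀cd.2 hdb⟩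
  -- all iterated derivatives vanish at t₀
  have hD0 : ∀ j, deriv^[j] w t₀ = 0 := by
    have hbase : ∀ j, deriv^[j] w =ᶠ[nhds t₀] fun _ => (0:ℝ) := by
      intro j
      induction j with
      | zero =>
        filter_upwards [Ioo_mem_nhds ht₀cd.1 ht₀cd.2] with t ht
        exact hvanish t (Ioo_subset_Icc_self ht)
      | succ k ih =>
        rw [Function.iterate_succ_apply']
        have := ih.deriv
        simpa using this
    exact fun j => (hbase j).eq_of_nhds
  -- main interior claim
  have hIoo : ∀ t ∈ Ioo a b, w t = 0 := by
    have hex : ∀ i : ℕ, ∃ cci : ℕ → ℝ → ℝ, (∀ j, ContDiffOn ℝ (⊤:ℕ∞) (cci j) V) ∧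
        (i ≤ m → ∀ s ∈ V, (Lop h)^[i] w s
          = deriv^[2*i] w s + ∑ j ∈ Finset.range (2*i), cci j s * deriv^[j] w s) := by
      intro i
      by_cases hi : i ≤ m
      · obtain ⟨cci, h1, h2⟩ := lop_expansion (N := 2*m) hVo hwV hhV i (by omega)
        exact ⟨cci, h1, fun _ => h2⟩
      · exact ⟨fun _ _ => 0, fun _ => contDiffOn_const, fun hcon => absurd hcon hi⟩
    choose cc hccs hcce using hex
    have hAm : 0 < A m := hA m (Finset.mem_Icc.2 ⟨hm, le_refl m⟩)
    intro t htab
    set a' := min t t₀ with ha'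
    set b' := max t t₀ with hb'
    have ha'V : a' ∈ V := by
      constructor
      · exact lt_min htab.1 ht₀.1
      · exact lt_of_le_of_lt (min_le_left _ _) htab.2
    have hb'V : b' ∈ V := by
      constructor
      · exact lt_of_lt_of_le htab.1 (le_max_left _ _)
      · exact max_lt htab.2 ht₀.2
    have ha'b' : a' ≤ b' := min_le_max
    have hKsub : Icc a' b' ⊆ V := fun x hx =>
      ⟨lt_of_lt_of_le ha'V.1 hx.1, lt_of_le_of_lt hx.2 hb'V.2⟩
    set F : ℝ → ℝ := fun s => |α₀ s| + |w s| ^ (p-2)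
      + ∑ i ∈ Finset.Icc 1 m,
          (A i * (∑ j ∈ Finset.range (2*m), |cc i j s|) + A i) with hF
    have hFc : ContinuousOn F (Icc a' b') := by
      apply ContinuousOn.add
      apply ContinuousOn.add
      · exact (hα₀cont.mono (hKsub.trans hVsub)).abs
      · apply ContinuousOn.rpow_const
        · exact (hw.continuousOn.mono (hKsub.trans hVsub)).abs
        · intro x _; right; linarith
      · apply continuousOn_finset_sum
        intro i _
        apply ContinuousOn.add _ continuousOn_const
        apply ContinuousOn.mul continuousOn_const
        apply continuousOn_finset_sum
        intro j _
        exact (((hccs i j).continuousOn).mono hKsub).abs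
    have hFnn : ∀ s ∈ Icc a' b', 0 ≤ F s := by
      intro s _
      have h1 : (0:ℝ) ≤ |α₀ s| := abs_nonneg _
      have h2 : (0:ℝ) ≤ |w s| ^ (p-2) := Real.rpow_nonneg (abs_nonneg _) _
      have h3 : (0:ℝ) ≤ ∑ i ∈ Finset.Icc 1 m,
          (A i * (∑ j ∈ Finset.range (2*m), |cc i j s|) + A i) := by
        apply Finset.sum_nonneg
        intro i hi
        have h5 := (hA i hi).le
        have h4 : (0:ℝ) ≤ ∑ j ∈ Finset.range (2*m), |cc i j s| :=
          Finset.sum_nonneg fun j _ => abs_nonneg _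
        nlinarith
      simp only [hF]; linarith
    obtain ⟨G, hG⟩ := (isCompact_Icc).exists_bound_of_continuousOn hFc
    have hGF : ∀ s ∈ Icc a' b', F s ≤ G := fun s hs =>
      (le_abs_self _).trans (by simpa [Real.norm_eq_abs] using hG s hs)
    have hG0 : (0:ℝ) ≤ G :=
      le_trans (hFnn a' (left_mem_Icc.2 ha'b')) (hGF a' (left_mem_Icc.2 ha'b'))
    set C := G / A m with hC
    have hC0 : 0 ≤ C := div_nonneg hG0 hAm.le
    have key : ∀ s ∈ Icc a' b', |deriv^[2*m] w s|
        ≤ C * ∑ j ∈ Finset.range (2*m), |deriv^[j] w s| := by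
      intro s hs
      have hsV : s ∈ V := hKsub hs
      set Sig := ∑ j ∈ Finset.range (2*m), |deriv^[j] w s| with hSig
      have hSig0 : 0 ≤ Sig := Finset.sum_nonneg fun j _ => abs_nonneg _
      have hDle : ∀ j, j < 2*m → |deriv^[j] w s| ≤ Sig := fun j hj =>
        Finset.single_le_sum (f := fun l => |deriv^[l] w s|) (fun l _ => abs_nonneg _)
          (Finset.mem_range.2 hj)
      have e0 := hode s hsV
      have esum : ∑ i ∈ Finset.Icc 1 m, A i * (-1:ℝ)^i * ((Lop h)^[i] w) s
          = ∑ i ∈ Finset.Icc 1 m, A i * (-1:ℝ)^i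
              * (deriv^[2*i] w s + ∑ j ∈ Finset.range (2*i), cc i j s * deriv^[j] w s) :=
        Finset.sum_congr rfl fun i hi => by rw [hcce i (Finset.mem_Icc.1 hi).2 s hsV]
      rw [esum] at e0
      have hins : Finset.Icc 1 m = insert m (Finset.Icc 1 (m-1)) := by
        ext x; simp only [Finset.mem_Icc, Finset.mem_insert]; omega
      have hnotm : m ∉ Finset.Icc 1 (m-1) := by
        simp only [Finset.mem_Icc]; omega
      rw [hins, Finset.sum_insert hnotm] at e0
      have eq1 : A m * (-1:ℝ)^m * deriv^[2*m] w s
          = |w s| ^ (p-2) * w s - α₀ s * w s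
            - A m * (-1:ℝ)^m * (∑ j ∈ Finset.range (2*m), cc m j s * deriv^[j] w s)
            - ∑ i ∈ Finset.Icc 1 (m-1), A i * (-1:ℝ)^i
                * (deriv^[2*i] w s + ∑ j ∈ Finset.range (2*i), cc i j s * deriv^[j] w s) := by
        linear_combination e0
      have hw0' : |w s| = |deriv^[0] w s| := rfl
      have hb1 : |(|w s|) ^ (p-2) * w s| ≤ |w s| ^ (p-2) * Sig := by
        rw [abs_mul, abs_of_nonneg (Real.rpow_nonneg (abs_nonneg _) _)]
        refine mul_le_mul_of_nonneg_left ?_ (Real.rpow_nonneg (abs_nonneg _) _)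
        rw [hw0']; exact hDle 0 (by omega)
      have hb2 : |α₀ s * w s| ≤ |α₀ s| * Sig := by
        rw [abs_mul]
        refine mul_le_mul_of_nonneg_left ?_ (abs_nonneg _)
        rw [hw0']; exact hDle 0 (by omega)
      have hSgen : ∀ i k, k ≤ 2*m → |∑ j ∈ Finset.range k, cc i j s * deriv^[j] w s|
          ≤ (∑ j ∈ Finset.range (2*m), |cc i j s|) * Sig := by
        intro i k hk
        calc |∑ j ∈ Finset.range k, cc i j s * deriv^[j] w s|
            ≤ ∑ j ∈ Finset.range k, |cc i j s * deriv^[j] w s| :=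
              Finset.abs_sum_le_sum_abs _ _
          _ ≤ ∑ j ∈ Finset.range (2*m), |cc i j s * deriv^[j] w s| :=
              Finset.sum_le_sum_of_subset_of_nonneg
                (Finset.range_subset_range.2 hk) (fun j _ _ => abs_nonneg _)
          _ ≤ ∑ j ∈ Finset.range (2*m), |cc i j s| * Sig := by
              apply Finset.sum_le_sum
              intro j hj
              rw [abs_mul]
              exact mul_le_mul_of_nonneg_left (hDle j (Finset.mem_range.1 hj)) (abs_nonneg _)
          _ = (∑ j ∈ Finset.range (2*m), |cc i j s|) * Sig := (Finset.sum_mul _ _ _).symm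
      have hb3 : |A m * (-1:ℝ)^m * (∑ j ∈ Finset.range (2*m), cc m j s * deriv^[j] w s)|
          ≤ A m * (∑ j ∈ Finset.range (2*m), |cc m j s|) * Sig := by
        rw [abs_mul, abs_mul, abs_pow, abs_neg, abs_one, one_pow, mul_one, abs_of_pos hAm,
          mul_assoc]
        exact mul_le_mul_of_nonneg_left (hSgen m (2*m) le_rfl) hAm.le
      have hb4 : |∑ i ∈ Finset.Icc 1 (m-1), A i * (-1:ℝ)^i
            * (deriv^[2*i] w s + ∑ j ∈ Finset.range (2*i), cc i j s * deriv^[j] w s)|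
          ≤ (∑ i ∈ Finset.Icc 1 (m-1),
              (A i * (∑ j ∈ Finset.range (2*m), |cc i j s|) + A i)) * Sig := by
        have per : ∀ i ∈ Finset.Icc 1 (m-1),
            |A i * (-1:ℝ)^i * (deriv^[2*i] w s
              + ∑ j ∈ Finset.range (2*i), cc i j s * deriv^[j] w s)|
            ≤ (A i * (∑ j ∈ Finset.range (2*m), |cc i j s|) + A i) * Sig := by
          intro i hi
          have him := Finset.mem_Icc.1 hi
          have hiA : 0 < A i := hA i (Finset.mem_Icc.2 ⟨him.1, by omega⟩)
          have h2i : 2*i < 2*m := by omega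
          have hDi : |deriv^[2*i] w s| ≤ Sig := hDle (2*i) h2i
          have hSi := hSgen i (2*i) (by omega)
          have habs2 : |A i * (-1:ℝ)^i * (deriv^[2*i] w s
              + ∑ j ∈ Finset.range (2*i), cc i j s * deriv^[j] w s)|
              = A i * |deriv^[2*i] w s
                + ∑ j ∈ Finset.range (2*i), cc i j s * deriv^[j] w s| := by
            rw [abs_mul, abs_mul, abs_pow, abs_neg, abs_one, one_pow, mul_one, abs_of_pos hiA]
          rw [habs2]
          have htr : |deriv^[2*i] w s + ∑ j ∈ Finset.range (2*i), cc i j s * deriv^[j] w s|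
              ≤ Sig + (∑ j ∈ Finset.range (2*m), |cc i j s|) * Sig :=
            le_trans (abs_add_le _ _) (add_le_add hDi hSi)
          calc A i * |deriv^[2*i] w s + ∑ j ∈ Finset.range (2*i), cc i j s * deriv^[j] w s|
              ≤ A i * (Sig + (∑ j ∈ Finset.range (2*m), |cc i j s|) * Sig) :=
                mul_le_mul_of_nonneg_left htr hiA.le
            _ = (A i * (∑ j ∈ Finset.range (2*m), |cc i j s|) + A i) * Sig := by ring
        calc |∑ i ∈ Finset.Icc 1 (m-1), A i * (-1:ℝ)^i
              * (deriv^[2*i] w s + ∑ j ∈ Finset.range (2*i), cc i j s * deriv^[j] w s)|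
            ≤ ∑ i ∈ Finset.Icc 1 (m-1), |A i * (-1:ℝ)^i
              * (deriv^[2*i] w s + ∑ j ∈ Finset.range (2*i), cc i j s * deriv^[j] w s)| :=
              Finset.abs_sum_le_sum_abs _ _
          _ ≤ ∑ i ∈ Finset.Icc 1 (m-1),
              (A i * (∑ j ∈ Finset.range (2*m), |cc i j s|) + A i) * Sig :=
              Finset.sum_le_sum per
          _ = (∑ i ∈ Finset.Icc 1 (m-1),
              (A i * (∑ j ∈ Finset.range (2*m), |cc i j s|) + A i)) * Sig :=
              (Finset.sum_mul _ _ _).symm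
      have tri4 : ∀ x y z u : ℝ, |x - y - z - u| ≤ |x| + |y| + |z| + |u| := by
        intro x y z u
        have t1 : |x - y - z - u| ≤ |x - y - z| + |u| := by
          simpa [sub_eq_add_neg (x - y - z) u, abs_neg] using abs_add_le (x - y - z) (-u)
        have t2 : |x - y - z| ≤ |x - y| + |z| := by
          simpa [sub_eq_add_neg (x - y) z, abs_neg] using abs_add_le (x - y) (-z)
        have t3 : |x - y| ≤ |x| + |y| := by
          simpa [sub_eq_add_neg x y, abs_neg] using abs_add_le x (-y)
        linarith
      have habs : A m * |deriv^[2*m] w s| ≤ F s * Sig := by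
        have hL : A m * |deriv^[2*m] w s| = |A m * (-1:ℝ)^m * deriv^[2*m] w s| := by
          rw [abs_mul, abs_mul, abs_pow, abs_neg, abs_one, one_pow, mul_one, abs_of_pos hAm]
        rw [hL, eq1]
        refine le_trans (tri4 _ _ _ _) ?_
        have hFs : F s = |α₀ s| + |w s| ^ (p-2)
            + ((A m * (∑ j ∈ Finset.range (2*m), |cc m j s|) + A m)
              + ∑ i ∈ Finset.Icc 1 (m-1),
                (A i * (∑ j ∈ Finset.range (2*m), |cc i j s|) + A i)) := by
          simp only [hF]
          rw [hins, Finset.sum_insert hnotm]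
        have hexp : F s * Sig = |w s| ^ (p-2) * Sig + |α₀ s| * Sig
            + (A m * (∑ j ∈ Finset.range (2*m), |cc m j s|) * Sig + A m * Sig)
            + (∑ i ∈ Finset.Icc 1 (m-1),
                (A i * (∑ j ∈ Finset.range (2*m), |cc i j s|) + A i)) * Sig := by
          rw [hFs]; ring
        rw [hexp]
        have hAmS : 0 ≤ A m * Sig := mul_nonneg hAm.le hSig0
        linarith [hb1, hb2, hb3, hb4]
      have hFG := hGF s hs
      have hfin : A m * |deriv^[2*m] w s| ≤ G * Sig :=
        le_trans habs (mul_le_mul_of_nonneg_right hFG hSig0)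
      rw [hC, div_mul_eq_mul_div, le_div_iff₀ hAm]
      calc |deriv^[2*m] w s| * A m = A m * |deriv^[2*m] w s| := mul_comm _ _
        _ ≤ G * Sig := hfin
    set f : ℝ → (Fin (2*m) → ℝ) := fun s j => deriv^[(j:ℕ)] w s with hfdef
    set f' : ℝ → (Fin (2*m) → ℝ) := fun s j => deriv^[(j:ℕ)+1] w s with hf'def
    have hfd : ∀ s ∈ V, HasDerivAt f (f' s) s := fun s hs =>
      hasDerivAt_pi.2 fun j => iter_deriv_hasDerivAt hVo hwV j.2 hs
    set K := 1 + (2*m : ℝ) * C with hK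
    have hK1 : (1:ℝ) ≤ K := by nlinarith [hC0]
    have hK0 : (0:ℝ) ≤ K := by linarith
    have hnorm : ∀ s ∈ Icc a' b', ‖f' s‖ ≤ K * ‖f s‖ := by
      intro s hs
      have hfs0 : (0:ℝ) ≤ ‖f s‖ := norm_nonneg _
      rw [pi_norm_le_iff_of_nonneg (by nlinarith)]
      intro j
      rcases Nat.lt_or_ge ((j:ℕ)+1) (2*m) with hlt | hge
      · have hj1 : ‖f' s j‖ = ‖f s ⟨(j:ℕ)+1, hlt⟩‖ := rfl
        rw [hj1]
        calc ‖f s ⟨(j:ℕ)+1, hlt⟩‖ ≤ ‖f s‖ := norm_le_pi_norm _ _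
          _ = 1 * ‖f s‖ := (one_mul _).symm
          _ ≤ K * ‖f s‖ := mul_le_mul_of_nonneg_right hK1 hfs0
      · have heq : (j:ℕ)+1 = 2*m := le_antisymm j.2 hge
        have hDs := key s hs
        have hsum : ∑ l ∈ Finset.range (2*m), |deriv^[l] w s| ≤ (2*m : ℝ) * ‖f s‖ := by
          calc ∑ l ∈ Finset.range (2*m), |deriv^[l] w s|
              ≤ ∑ _l ∈ Finset.range (2*m), ‖f s‖ := by
                apply Finset.sum_le_sum
                intro l hl
                have he : |deriv^[l] w s| = ‖f s ⟨l, Finset.mem_range.1 hl⟩‖ := rfl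
                rw [he]; exact norm_le_pi_norm _ _
            _ = (2*m : ℝ) * ‖f s‖ := by
                rw [Finset.sum_const, Finset.card_range, nsmul_eq_mul]
                push_cast; ring
        have he2 : ‖f' s j‖ = |deriv^[2*m] w s| := by
          show ‖deriv^[(j:ℕ)+1] w s‖ = _
          rw [heq, Real.norm_eq_abs]
        rw [he2]
        calc |deriv^[2*m] w s| ≤ C * ((2*m:ℝ) * ‖f s‖) :=
              le_trans hDs (mul_le_mul_of_nonneg_left hsum hC0)
          _ ≤ K * ‖f s‖ := by nlinarith
    have hfc : ContinuousOn f (Icc a' b') := by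
      apply continuousOn_pi.2
      intro j
      exact ((iter_deriv_contDiffOn hVo hwV j.2.le).continuousOn).mono hKsub
    have hft₀ : f t₀ = 0 := funext fun j => hD0 _
    have ht₀ab' : t₀ ∈ Icc a' b' := ⟨min_le_right _ _, le_max_right _ _⟩
    have fwd : ∀ x ∈ Icc t₀ b', f x = 0 := by
      intro x hx
      have hsub : Icc t₀ b' ⊆ Icc a' b' := Icc_subset_Icc ht₀ab'.1 le_rfl
      have hb1 := norm_le_gronwallBound_of_norm_deriv_right_le
        (f := f) (f' := f') (δ := 0) (K := K) (ε := 0) (a := t₀) (b := b')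
        (hfc.mono hsub)
        (fun s hs => (hfd s (hKsub (hsub (Ico_subset_Icc_self hs)))).hasDerivWithinAt)
        (by rw [hft₀]; simp)
        (fun s hs => by rw [add_zero]; exact hnorm s (hsub (Ico_subset_Icc_self hs)))
        x hx
      have hz : ‖f x‖ ≤ 0 := by simpa [gronwallBound_ε0_δ0] using hb1
      exact norm_le_zero_iff.1 hz
    have bwd : ∀ x ∈ Icc a' t₀, f x = 0 := by
      intro x hx
      set g : ℝ → (Fin (2*m) → ℝ) := fun s => f (-s) with hgdef
      set g' : ℝ → (Fin (2*m) → ℝ) := fun s => (-1 : ℝ) • f' (-s) with hg'def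
      have hmem : ∀ s ∈ Icc (-t₀) (-a'), -s ∈ Icc a' t₀ :=
        fun s hs => ⟨by linarith [hs.2], by linarith [hs.1]⟩
      have hsub2 : Icc a' t₀ ⊆ Icc a' b' := Icc_subset_Icc le_rfl ht₀ab'.2
      have hgc : ContinuousOn g (Icc (-t₀) (-a')) :=
        ContinuousOn.comp (hfc.mono hsub2) continuous_neg.continuousOn
          (fun s hs => hmem s hs)
      have hgd : ∀ s ∈ Ico (-t₀) (-a'), HasDerivWithinAt g (g' s) (Ici s) s := by
        intro s hs
        have hmV : -s ∈ V := hKsub (hsub2 (hmem s (Ico_subset_Icc_self hs)))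
        have h3 : HasDerivAt g (g' s) s := by
          apply hasDerivAt_pi.2
          intro j
          have hc := iter_deriv_hasDerivAt hVo hwV j.2 hmV
          have hcomp := HasDerivAt.comp_of_eq
            (x := s) (h := fun y : ℝ => -y) hc ((hasDerivAt_id s).neg) rfl
          convert hcomp using 1
          show ((-1:ℝ) • f' (-s)) j = deriv^[(j:ℕ)+1] w (-s) * -1
          show (-1:ℝ) * deriv^[(j:ℕ)+1] w (-s) = _
          ring
          all_goals rfl
        exact h3.hasDerivWithinAt
      have hb1 := norm_le_gronwallBound_of_norm_deriv_right_le
        (f := g) (f' := g') (δ := 0) (K := K) (ε := 0) (a := -t₀) (b := -a')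
        hgc hgd
        (by show ‖f (-(-t₀))‖ ≤ 0; rw [neg_neg, hft₀]; simp)
        (fun s hs => by
          rw [add_zero]
          have he : ‖g' s‖ = ‖f' (-s)‖ := by rw [hg'def]; simp [norm_smul]
          rw [he]
          exact hnorm (-s) (hsub2 (hmem s (Ico_subset_Icc_self hs))))
        (-x) ⟨by linarith [hx.2], by linarith [hx.1]⟩
      have hz : g (-x) = 0 := by simpa [gronwallBound_ε0_δ0] using hb1
      simpa [hgdef, neg_neg] using hz
    have hft : f t = 0 := by
      rcases le_total t t₀ with hle | hle
      · exact bwd t ⟨min_le_left _ _, hle⟩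
      · exact fwd t ⟨hle, le_max_left _ _⟩
    have hw0 : w t = f t ⟨0, by omega⟩ := rfl
    rw [hw0, hft]; rfl
  -- conclude on the closed interval
  intro t ht
  rcases eq_or_lt_of_le ht.1 with rfl | hlt
  · -- t = a
    have hclos : a ∈ closure (Ioo a b) := by
      rw [closure_Ioo hab.ne]; exact ⟨le_refl a, hab.le⟩
    have hne : (nhdsWithin a (Ioo a b)).NeBot := mem_closure_iff_nhdsWithin_neBot.1 hclos
    have lim1 : Tendsto w (nhdsWithin a (Ioo a b)) (nhds (w a)) :=
      (hw.continuousOn.continuousWithinAt ⟨le_refl a, hab.le⟩).mono_left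
        (nhdsWithin_mono a Ioo_subset_Icc_self)
    have lim2 : Tendsto w (nhdsWithin a (Ioo a b)) (nhds 0) := by
      refine Tendsto.congr' ?_ tendsto_const_nhds
      filter_upwards [self_mem_nhdsWithin] with s hs
      exact (hIoo s hs).symm
    exact tendsto_nhds_unique lim1 lim2
  rcases eq_or_lt_of_le ht.2 with rfl | hlt2
  · -- t = b
    have hclos : t ∈ closure (Ioo a t) := by
      rw [closure_Ioo (ne_of_lt hlt)]; exact ⟨hlt.le, le_refl t⟩
    have hne : (nhdsWithin t (Ioo a t)).NeBot := mem_closure_iff_nhdsWithin_neBot.1 hclos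
    have lim1 : Tendsto w (nhdsWithin t (Ioo a t)) (nhds (w t)) :=
      (hw.continuousOn.continuousWithinAt ⟨hlt.le, le_refl t⟩).mono_left
        (nhdsWithin_mono t Ioo_subset_Icc_self)
    have lim2 : Tendsto w (nhdsWithin t (Ioo a t)) (nhds 0) := by
      refine Tendsto.congr' ?_ tendsto_const_nhds
      filter_upwards [self_mem_nhdsWithin] with s hs
      exact (hIoo s ⟨hs.1, hs.2.trans_le ht.2⟩).symm
    exact tendsto_nhds_unique lim1 lim2
  exact hIoo t ⟨hlt, hlt2⟩
end

section
/- Let E be a real normed vector space, x ∈ E, and k ≥ 1 an integer. Let r : E → ℝ be of class C^k on a neighborhood of x with Fréchet derivative Dr(x) ≠ 0, and let w : ℝ → ℝ be of class C^k on a neighborhood of r(x). If the iterated Fréchet derivatives of the composition u = w ∘ r satisfy D^l u(x) = 0 for all 1 ≤ l ≤ k, then w^{(l)}(r(x)) = 0 for all 1 ≤ l ≤ k, where w^{(l)} denotes the l-th derivative of w. -/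
/-!
Choose `v` with `Dr(x) v = 1`. The inverse function theorem applied to `t ↦ r (x + t • v)`
yields a `C^k` local right inverse `σ` of `r` with `σ (r x) = x`, so `w = (w ∘ r) ∘ σ` near
`r x`. By Faà di Bruno's formula every term of the `l`-th derivative of `(w ∘ r) ∘ σ` at `r x`
(`1 ≤ l`) contains a derivative of `w ∘ r` at `x` of some order between `1` and `l`, hence vanishes.
-/

open scoped Topology

section

variable {𝕜 E F G : Type*} [NontriviallyNormedField 𝕜] [NormedAddCommGroup E] [NormedSpace 𝕜 E]
  [NormedAddCommGroup F] [NormedSpace 𝕜 F] [NormedAddCommGroup G] [NormedSpace 𝕜 G]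

theorem FormalMultilinearSeries.taylorComp_eq_zero {q : FormalMultilinearSeries 𝕜 F G} {n : ℕ}
    (hn : 0 < n) (hq : ∀ m, 0 < m → m ≤ n → q m = 0) (p : FormalMultilinearSeries 𝕜 E F) :
    q.taylorComp p n = 0 := by
  refine Finset.sum_eq_zero fun c _ ↦ ?_
  ext v
  simp [hq c.length (c.length_pos hn) c.length_le]

theorem iteratedFDeriv_comp_eq_zero {g : F → G} {f : E → F} {x : E} {n : WithTop ℕ∞}
    (hg : ContDiffAt 𝕜 n g (f x)) (hf : ContDiffAt 𝕜 n f x) {i : ℕ} (hi : i ≤ n) (hi₀ : 0 < i)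
    (hg₀ : ∀ m, 0 < m → m ≤ i → iteratedFDeriv 𝕜 m g (f x) = 0) :
    iteratedFDeriv 𝕜 i (g ∘ f) x = 0 := by
  rw [iteratedFDeriv_comp hg hf hi]
  exact FormalMultilinearSeries.taylorComp_eq_zero hi₀ hg₀ _

theorem ContinuousLinearMap.exists_apply_eq_one {f : E →L[𝕜] 𝕜} (hf : f ≠ 0) :
    ∃ v, f v = 1 := by
  obtain ⟨v, hv⟩ := DFunLike.ne_iff.mp hf
  exact ⟨(f v)⁻¹ • v, by simp_all⟩

theorem HasFDerivAt.hasDerivAt_comp_add_smul {r : E → 𝕜} {r' : E →L[𝕜] 𝕜} {x : E}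
    (hr : HasFDerivAt r r' x) (v : E) :
    HasDerivAt (fun t : 𝕜 ↦ r (x + t • v)) (r' v) 0 := by
  have hline : HasDerivAt (fun t : 𝕜 ↦ x + t • v) v 0 := by
    simpa using ((hasDerivAt_id (0 : 𝕜)).smul_const v).const_add x
  exact (by simpa using hr : HasFDerivAt r r' (x + (0 : 𝕜) • v)).comp_hasDerivAt 0 hline

end

section

variable {𝕂 E : Type*} [RCLike 𝕂] [NormedAddCommGroup E] [NormedSpace 𝕂 E]

theorem ContDiffAt.exists_contDiffAt_rightInverse {r : E → 𝕂} {x : E} {n : WithTop ℕ∞}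
    (hr : ContDiffAt 𝕂 n r x) (hn : n ≠ 0) (hr' : fderiv 𝕂 r x ≠ 0) :
    ∃ σ : 𝕂 → E, ContDiffAt 𝕂 n σ (r x) ∧ σ (r x) = x ∧ ∀ᶠ s in 𝓝 (r x), r (σ s) = s := by
  obtain ⟨v, hv⟩ := ContinuousLinearMap.exists_apply_eq_one hr'
  have hline : ContDiff 𝕂 n fun t : 𝕂 ↦ x + t • v := by fun_prop
  have hg : ContDiffAt 𝕂 n (fun t : 𝕂 ↦ r (x + t • v)) 0 :=
    ContDiffAt.comp (g := r) _ (by simpa using hr) hline.contDiffAt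
  have hg' : HasFDerivAt (fun t : 𝕂 ↦ r (x + t • v))
      ((ContinuousLinearEquiv.refl 𝕂 𝕂 : 𝕂 ≃L[𝕂] 𝕂) : 𝕂 →L[𝕂] 𝕂) 0 := by
    have := (hr.differentiableAt hn).hasFDerivAt.hasDerivAt_comp_add_smul v
    rw [hv] at this
    convert this.hasFDerivAt
    ext1
    simp
  have hφ := hg.to_localInverse hg' hn
  have hφ₀ := hg.localInverse_apply_image hg' hn
  have hrφ := (hg.hasStrictFDerivAt' hg' hn).eventually_right_inverse
  simp only [zero_smul, add_zero] at hφ hφ₀ hrφ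
  exact ⟨_, hline.contDiffAt.comp _ hφ, by simp [hφ₀], hrφ⟩

end

theorem deriv_vanish_of_comp_vanish_general {E : Type*} [NormedAddCommGroup E] [NormedSpace ℝ E]
    (x : E) (k : ℕ) (r : E → ℝ) (w : ℝ → ℝ)
    (hr : ContDiffAt ℝ k r x) (hr' : fderiv ℝ r x ≠ 0)
    (hw : ContDiffAt ℝ k w (r x))
    (hu : ∀ l : ℕ, 1 ≤ l → l ≤ k → iteratedFDeriv ℝ l (w ∘ r) x = 0) :
    ∀ l : ℕ, 1 ≤ l → l ≤ k → iteratedDeriv l w (r x) = 0 := by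
  intro l hl hlk
  have hk : (k : WithTop ℕ∞) ≠ 0 := by exact_mod_cast (by omega : k ≠ 0)
  obtain ⟨σ, hσ, hσx, hrσ⟩ := hr.exists_contDiffAt_rightInverse hk hr'
  have hwσ : w =ᶠ[𝓝 (r x)] (w ∘ r) ∘ σ := hrσ.mono fun s hs ↦ by simp [hs]
  have hu' : ContDiffAt ℝ k (w ∘ r) (σ (r x)) := by rw [hσx]; exact hw.comp x hr
  rw [hwσ.iteratedDeriv_eq, iteratedDeriv_eq_iteratedFDeriv,
    iteratedFDeriv_comp_eq_zero hu' hσ (by exact_mod_cast hlk) hl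
      fun m hm hml ↦ by rw [hσx]; exact hu m hm (hml.trans hlk)]
  simp

/-- Euclidean version of Proposition 4.9: if `u = w ∘ r` has vanishing iterated Fréchet
derivatives up to order `k` at `x`, and `Dr(x) ≠ 0`, then the derivatives of `w` up to
order `k` vanish at `r(x)`. -/
theorem deriv_vanish_of_comp_vanish {E : Type*} [NormedAddCommGroup E] [NormedSpace ℝ E]
    (x : E) (k : ℕ) (hk : 1 ≤ k) (r : E → ℝ) (w : ℝ → ℝ)
    (hr : ContDiffAt ℝ k r x) (hr' : fderiv ℝ r x ≠ 0)
    (hw : ContDiffAt ℝ k w (r x))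
    (hu : ∀ l : ℕ, 1 ≤ l → l ≤ k → iteratedFDeriv ℝ l (w ∘ r) x = 0) :
    ∀ l : ℕ, 1 ≤ l → l ≤ k → iteratedDeriv l w (r x) = 0 :=
  deriv_vanish_of_comp_vanish_general x k r w hr hr' hw hu
end
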